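/- Let G be a finite simple graph, X ⊆ V(G), and let M be an X-minor of G. If M has an X-spanning path (respectively, an X-spanning cycle) as a subgraph, then G contains an X-spanning generalized path (respectively, an X-spanning generalized cycle). -/

import Mathlib

open SimpleGraph

variable {V : Type*} {W : Type*}

/-- `S` is an `X`-separator of `G`: at least two components of `G - S`
contain a vertex of `X`. -/
def SepSet (G : SimpleGraph V) (X S : Set V) : Prop :=
  ∃ (x y : V) (hx : x ∈ X ∧ x ∉ S) (hy : y ∈ X ∧ y ∉ S),
    ¬ (G.induce Sᶜ).Reachable ⟨x, hx.2⟩ ⟨y, hy.2⟩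

/-- `κ_G(X)`: the largest `k ≤ |X| - 1` such that every `X`-separator of `G`
has at least `k` vertices. -/
noncomputable def graphKappa (G : SimpleGraph V) (X : Set V) : ℕ :=
  sSup {k : ℕ | k ≤ X.ncard - 1 ∧ ∀ S : Set V, SepSet G X S → k ≤ S.ncard}

/-- `G/vy`: the graph obtained from `G` by contracting the edge `vy` into `v`,
i.e. `y` is removed (it becomes an isolated vertex of the ambient type) and an
edge `vz` is added for every `z` with `yz ∈ E(G)` and `vz ∉ E(G)`. -/
def contractEdge (G : SimpleGraph V) (v y : V) : SimpleGraph V where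
  Adj a b := a ≠ y ∧ b ≠ y ∧ a ≠ b ∧
    (G.Adj a b ∨ (a = v ∧ G.Adj y b) ∨ (b = v ∧ G.Adj a y))
  symm := by
    constructor
    rintro a b ⟨ha, hb, hab, h⟩
    refine ⟨hb, ha, hab.symm, ?_⟩
    rcases h with h | ⟨rfl, h⟩ | ⟨rfl, h⟩
    · exact Or.inl h.symm
    · exact Or.inr (Or.inr ⟨rfl, h.symm⟩)
    · exact Or.inr (Or.inl ⟨rfl, h.symm⟩)
  loopless := ⟨by rintro a ⟨_, _, h, _⟩; exact h rfl⟩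

/-- All edges of the graph `H` lie inside the vertex set `U`; this lets a pair
`(U, H)` with `IsGraphOn H U` model a graph whose vertex set is `U ⊆ V`. -/
def IsGraphOn (H : SimpleGraph V) (U : Set V) : Prop :=
  ∀ a b, H.Adj a b → a ∈ U ∧ b ∈ U

/-- `ContractSeq X U H U' M`: the graph `M` on the vertex set `U'` is obtained
from the graph `H` on the vertex set `U` by a (possibly empty) sequence of
contractions of `X`-legal edges (an edge `vy` is `X`-legal if `y ∉ X`; it is
contracted into `v`). -/
inductive ContractSeq (X : Set V) : Set V → SimpleGraph V → Set V → SimpleGraph V → Prop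
  | refl (U : Set V) (H : SimpleGraph V) : ContractSeq X U H U H
  | step {U : Set V} {H : SimpleGraph V} {U' : Set V} {M : SimpleGraph V}
      (v y : V) (hadj : H.Adj v y) (hy : y ∉ X)
      (htail : ContractSeq X (U \ {y}) (contractEdge H v y) U' M) :
      ContractSeq X U H U' M

/-- `M`, a graph with vertex set `U ⊆ V`, is an `X`-minor of `G` (a minor of
`G` rooted at `X`): it is obtained from a subgraph of `G` containing `X` by a
(possibly empty) sequence of contractions of `X`-legal edges. -/
def IsXMinorOn (G : SimpleGraph V) (X : Set V) (U : Set V) (M : SimpleGraph V) : Prop :=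
  ∃ (U₀ : Set V) (H : SimpleGraph V), H ≤ G ∧ IsGraphOn H U₀ ∧ X ⊆ U₀ ∧
    ContractSeq X U₀ H U M

/-- `G` has an `X`-spanning generalized path: an edge-disjoint union of a path
`W` of `G` and `|X|` pairwise vertex-disjoint paths `P x` (for `x ∈ X`) from
`x` to a vertex `y x` of `W` such that `P x` meets `X` only in `x` and meets
`W` only in `y x` (possibly `x = y x`). -/
def HasGeneralizedXPath (G : SimpleGraph V) (X : Set V) : Prop :=
  ∃ (u v : V) (W : G.Walk u v), W.IsPath ∧
    ∃ (y : V → V) (P : (x : V) → x ∈ X → G.Walk x (y x)),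
      (∀ x hx, (P x hx).IsPath) ∧
      (∀ x hx, ∀ z ∈ (P x hx).support, z ∈ X → z = x) ∧
      (∀ x hx, ∀ z ∈ (P x hx).support, (z ∈ W.support ↔ z = y x)) ∧
      (∀ x hx x' hx', x ≠ x' →
        ∀ z, z ∈ (P x hx).support → z ∉ (P x' hx').support)

/-- `G` has an `X`-spanning generalized cycle: as in
`HasGeneralizedXPath`, with the path `W` replaced by a cycle `C` of `G`. -/
def HasGeneralizedXCycle (G : SimpleGraph V) (X : Set V) : Prop :=
  ∃ (w : V) (C : G.Walk w w), C.IsCycle ∧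
    ∃ (y : V → V) (P : (x : V) → x ∈ X → G.Walk x (y x)),
      (∀ x hx, (P x hx).IsPath) ∧
      (∀ x hx, ∀ z ∈ (P x hx).support, z ∈ X → z = x) ∧
      (∀ x hx, ∀ z ∈ (P x hx).support, (z ∈ C.support ↔ z = y x)) ∧
      (∀ x hx x' hx', x ≠ x' →
        ∀ z, z ∈ (P x hx).support → z ∉ (P x' hx').support)

/-!
An `X`-minor comes with a map `φ` sending each vertex of `G` to the vertex of `M` whose branch set
contains it: branch sets are connected, every edge of `M` is realized by an edge of `G` between the
corresponding branch sets, and `φ` fixes `X` because only vertices outside `X` are contracted away.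
A path of `M` lifts to a path of `G` meeting every branch set it passes through, by joining
consecutive lifted edges inside the branch sets; a cycle `w m ⋯ w` lifts to the lifted edge
`w m` closed up by the lift of the path `m ⋯ w`. Each `x ∈ X` is then attached to the lift by a
path inside its own branch set, stopped at its first vertex on the lift. These pendant paths lie
in distinct branch sets, hence are disjoint and meet `X` only at their start.
-/

/-- The pendant paths of `HasGeneralizedXPath` and `HasGeneralizedXCycle`, attached to the support
`L` of the path or cycle. -/
def HasXPendantPaths (G : SimpleGraph V) (X : Set V) (L : List V) : Prop :=
  ∃ (y : V → V) (P : (x : V) → x ∈ X → G.Walk x (y x)),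
    (∀ x hx, (P x hx).IsPath) ∧
    (∀ x hx, ∀ z ∈ (P x hx).support, z ∈ X → z = x) ∧
    (∀ x hx, ∀ z ∈ (P x hx).support, (z ∈ L ↔ z = y x)) ∧
    (∀ x hx x' hx', x ≠ x' →
      ∀ z, z ∈ (P x hx).support → z ∉ (P x' hx').support)

namespace SimpleGraph

variable {G H M N : SimpleGraph V} {φ ψ : V → V}

theorem Walk.exists_walk_to_first_mem {S : Set V} {a b : V} (P : G.Walk a b) (hb : b ∈ S) :
    ∃ c ∈ S, ∃ P' : G.Walk a c, P'.support ⊆ P.support ∧ ∀ z ∈ P'.support, z ∈ S → z = c := by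
  induction P with
  | nil => exact ⟨_, hb, .nil, by simp, by simp⟩
  | @cons a d b h P ih =>
    by_cases ha : a ∈ S
    · exact ⟨a, ha, .nil, by simp, by simp⟩
    · obtain ⟨c, hc, P', hsub, hfirst⟩ := ih hb
      refine ⟨c, hc, .cons h P', by simpa using List.cons_subset_cons a hsub, ?_⟩
      rintro z hz hzS
      rcases List.mem_cons.mp (Walk.support_cons h P' ▸ hz) with rfl | hz
      · exact absurd hzS ha
      · exact hfirst z hz hzS

/-- `φ` maps every vertex of `H` to the vertex of `M` whose branch set contains it. -/
structure IsMinorModel (H M : SimpleGraph V) (φ : V → V) : Prop where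
  exists_walk_of_eq : ∀ ⦃p q⦄, φ p = φ q → ∃ w : H.Walk p q, ∀ z ∈ w.support, φ z = φ p
  exists_adj_of_adj : ∀ ⦃a b⦄, M.Adj a b → ∃ p q, φ p = a ∧ φ q = b ∧ H.Adj p q

namespace IsMinorModel

theorem refl (H : SimpleGraph V) : IsMinorModel H H id where
  exists_walk_of_eq p q hpq := by
    cases hpq
    exact ⟨.nil, by simp⟩
  exists_adj_of_adj a b hab := ⟨a, b, rfl, rfl, hab⟩

theorem mono (hφ : IsMinorModel H M φ) (hHG : H ≤ G) : IsMinorModel G M φ where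
  exists_walk_of_eq p q hpq := by
    obtain ⟨w, hw⟩ := hφ.exists_walk_of_eq hpq
    exact ⟨w.mapLe hHG, by simpa using hw⟩
  exists_adj_of_adj a b hab := by
    obtain ⟨p, q, hp, hq, hpq⟩ := hφ.exists_adj_of_adj hab
    exact ⟨p, q, hp, hq, hHG hpq⟩

theorem exists_isPath_of_eq (hφ : IsMinorModel H M φ) {p q : V} (hpq : φ p = φ q) :
    ∃ R : H.Walk p q, R.IsPath ∧ ∀ z ∈ R.support, φ z = φ p := by
  classical
  obtain ⟨w, hw⟩ := hφ.exists_walk_of_eq hpq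
  exact ⟨w.bypass, w.bypass_isPath, fun z hz => hw z (w.support_bypass_subset_support hz)⟩

theorem exists_isPath_lift (hφ : IsMinorModel H M φ) {u v : V} (W : M.Walk u v)
    (hW : W.IsPath) {p q : V} (hp : φ p = u) (hq : φ q = v) :
    ∃ Q : H.Walk p q, Q.IsPath ∧ (∀ z ∈ Q.support, φ z ∈ W.support) ∧
      ∀ m ∈ W.support, ∃ c ∈ Q.support, φ c = m := by
  induction W generalizing p with
  | nil =>
    obtain ⟨R, hR, hRφ⟩ := hφ.exists_isPath_of_eq (hp.trans hq.symm)
    exact ⟨R, hR, fun z hz => by simp [hRφ z hz, hp],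
      fun m hm => ⟨p, R.start_mem_support, by simp_all⟩⟩
  | @cons u u' v h W' ih =>
    rw [Walk.cons_isPath_iff] at hW
    obtain ⟨a, b, rfl, rfl, hab⟩ := hφ.exists_adj_of_adj h
    obtain ⟨Q', hQ', hQ'φ, hQ'cover⟩ := ih hW.1 rfl hq
    obtain ⟨R, hR, hRφ⟩ := hφ.exists_isPath_of_eq hp
    have hRφ' : ∀ z ∈ R.support, φ z = φ a := fun z hz => (hRφ z hz).trans hp
    refine ⟨R.append (.cons hab Q'), ?_, ?_, ?_⟩
    · rw [Walk.isPath_def, Walk.support_append, Walk.support_cons, List.tail_cons,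
        List.nodup_append]
      refine ⟨hR.support_nodup, hQ'.support_nodup, ?_⟩
      rintro z hz _ hz' rfl
      exact hW.2 (hRφ' z hz ▸ hQ'φ z hz')
    · intro z hz
      rcases (Walk.mem_support_append_iff _ _).mp hz with hz | hz
      · simp [hRφ' z hz]
      · rcases List.mem_cons.mp (Walk.support_cons hab Q' ▸ hz) with rfl | hz
        · simp
        · simp [hQ'φ z hz]
    · intro m hm
      rcases List.mem_cons.mp (Walk.support_cons h W' ▸ hm) with rfl | hm
      · exact ⟨p, by simp, hp⟩
      · obtain ⟨c, hc, hcφ⟩ := hQ'cover m hm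
        exact ⟨c, by simp [hc], hcφ⟩

theorem comp (hφ : IsMinorModel H M φ) (hψ : IsMinorModel M N ψ) :
    IsMinorModel H N (ψ ∘ φ) where
  exists_walk_of_eq p q hpq := by
    classical
    obtain ⟨w, hw⟩ := hψ.exists_walk_of_eq hpq
    obtain ⟨Q, -, hQ, -⟩ := hφ.exists_isPath_lift w.bypass w.bypass_isPath rfl rfl
    exact ⟨Q, fun z hz => hw _ (w.support_bypass_subset_support (hQ z hz))⟩
  exists_adj_of_adj a b hab := by
    obtain ⟨a', b', rfl, rfl, hab'⟩ := hψ.exists_adj_of_adj hab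
    obtain ⟨p, q, rfl, rfl, hpq⟩ := hφ.exists_adj_of_adj hab'
    exact ⟨p, q, rfl, rfl, hpq⟩

end IsMinorModel

theorem isMinorModel_contractEdge [DecidableEq V] {v y : V} (h : H.Adj v y) :
    IsMinorModel H (contractEdge H v y) (Function.update id y v) where
  exists_walk_of_eq p q hpq := by
    have hvy : v ≠ y := h.ne
    by_cases hp : p = y <;> by_cases hq : q = y <;> simp [hp, hq] at hpq <;> subst_vars
    · exact ⟨.nil, by simp⟩
    · exact ⟨.cons h.symm .nil, by simp [hvy]⟩
    · exact ⟨.cons h .nil, by simp [hvy]⟩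
    · exact ⟨.nil, by simp⟩
  exists_adj_of_adj a b hab := by
    obtain ⟨ha, hb, -, hab | ⟨rfl, hb'⟩ | ⟨rfl, ha'⟩⟩ := hab
    · exact ⟨a, b, by simp [ha], by simp [hb], hab⟩
    · exact ⟨y, b, by simp, by simp [hb], hb'⟩
    · exact ⟨a, y, by simp [ha], by simp, ha'⟩

end SimpleGraph

theorem ContractSeq.exists_isMinorModel {X U U' : Set V} {H M : SimpleGraph V}
    (h : ContractSeq X U H U' M) : ∃ φ : V → V, IsMinorModel H M φ ∧ ∀ x ∈ X, φ x = x := by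
  classical
  induction h with
  | refl U H => exact ⟨id, .refl H, fun _ _ => rfl⟩
  | step v y hadj hy _ ih =>
    obtain ⟨φ, hφ, hφX⟩ := ih
    refine ⟨φ ∘ Function.update id y v, (isMinorModel_contractEdge hadj).comp hφ, fun x hx => ?_⟩
    have hxy : x ≠ y := fun h => hy (h ▸ hx)
    simp [hxy, hφX x hx]

theorem IsXMinorOn.exists_isMinorModel {G M : SimpleGraph V} {X U : Set V}
    (hM : IsXMinorOn G X U M) : ∃ φ : V → V, IsMinorModel G M φ ∧ ∀ x ∈ X, φ x = x := by
  obtain ⟨_, H, hHG, -, -, hseq⟩ := hM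
  obtain ⟨φ, hφ, hφX⟩ := hseq.exists_isMinorModel
  exact ⟨φ, hφ.mono hHG, hφX⟩

namespace SimpleGraph.IsMinorModel

variable {G M : SimpleGraph V} {φ : V → V} {X : Set V}

theorem hasXPendantPaths (hφ : IsMinorModel G M φ) (hX : ∀ x ∈ X, φ x = x) (L : List V)
    (hL : ∀ x ∈ X, ∃ c ∈ L, φ c = x) : HasXPendantPaths G X L := by
  classical
  have hpendant : ∀ x, ∃ yx, x ∈ X → ∃ P : G.Walk x yx, P.IsPath ∧
      (∀ z ∈ P.support, φ z = x) ∧ yx ∈ L ∧ ∀ z ∈ P.support, z ∈ L → z = yx := by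
    intro x
    by_cases hx : x ∈ X
    · obtain ⟨c, hcL, hc⟩ := hL x hx
      obtain ⟨R, hR⟩ := hφ.exists_walk_of_eq ((hX x hx).trans hc.symm)
      obtain ⟨yx, hyx, P, hPR, hPL⟩ := R.exists_walk_to_first_mem (S := {z | z ∈ L}) hcL
      have hsub := P.support_bypass_subset_support
      refine ⟨yx, fun _ => ⟨P.bypass, P.bypass_isPath, fun z hz => ?_, hyx,
        fun z hz => hPL z (hsub hz)⟩⟩
      rw [hR z (hPR (hsub hz)), hX x hx]
    · exact ⟨x, fun hx' => absurd hx' hx⟩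
  choose y hy using hpendant
  choose P hP hPφ hyL hPL using hy
  refine ⟨y, P, hP, fun x hx z hz hzX => ?_, fun x hx z hz => ⟨hPL x hx z hz, ?_⟩,
    fun x hx x' hx' hne z hz hz' => hne ?_⟩
  · rw [← hX z hzX, hPφ x hx z hz]
  · rintro rfl
    exact hyL x hx
  · rw [← hPφ x hx z hz, hPφ x' hx' z hz']

theorem hasGeneralizedXPath (hφ : IsMinorModel G M φ) (hX : ∀ x ∈ X, φ x = x) {u v : V}
    (W : M.Walk u v) (hW : W.IsPath) (hXW : ∀ x ∈ X, x ∈ W.support) :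
    HasGeneralizedXPath G X := by
  by_cases hnil : W.Nil
  · refine ⟨u, u, .nil, .nil, hφ.hasXPendantPaths hX _ fun x hx => ⟨x, ?_, hX x hx⟩⟩
    simpa [Walk.nil_iff_support_eq.mp hnil] using hXW x hx
  · obtain ⟨p, -, hp, -, -⟩ := hφ.exists_adj_of_adj (W.adj_snd hnil)
    obtain ⟨-, q, -, hq, -⟩ := hφ.exists_adj_of_adj (W.adj_penultimate hnil)
    obtain ⟨Q, hQ, -, hcover⟩ := hφ.exists_isPath_lift W hW hp hq
    exact ⟨p, q, Q, hQ, hφ.hasXPendantPaths hX _ fun x hx => hcover x (hXW x hx)⟩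

theorem hasGeneralizedXCycle (hφ : IsMinorModel G M φ) (hX : ∀ x ∈ X, φ x = x) {w : V}
    (C : M.Walk w w) (hC : C.IsCycle) (hXC : ∀ x ∈ X, x ∈ C.support) :
    HasGeneralizedXCycle G X := by
  cases C with
  | nil => exact absurd hC Walk.not_isCycle_nil
  | @cons _ m _ h D =>
    obtain ⟨hD, -⟩ := (Walk.cons_isCycle_iff D h).mp hC
    obtain ⟨p, q, hp, hq, hpq⟩ := hφ.exists_adj_of_adj h
    obtain ⟨Q, hQ, -, hcover⟩ := hφ.exists_isPath_lift D hD hq hp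
    have hQ_edge : s(p, q) ∉ Q.edges := by
      -- otherwise `Q` is the edge `q p` alone and misses the branch set of `D.penultimate`
      intro he
      have hDnil : ¬D.Nil := fun hn => h.ne hn.eq.symm
      have hm : D.penultimate ≠ m := by
        simpa [Walk.penultimate_cons_of_not_nil h D hDnil] using hC.snd_ne_penultimate.symm
      have hw : D.penultimate ≠ w := (D.adj_penultimate hDnil).ne
      obtain ⟨c, hc, hcφ⟩ := hcover _ (D.getVert_mem_support _)
      rw [hQ.eq_adj_toWalk_of_mem_edges (Sym2.eq_swap ▸ he)] at hc
      rcases (by simpa using hc : c = q ∨ c = p) with rfl | rfl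
      · exact hm (hcφ.symm.trans hq)
      · exact hw (hcφ.symm.trans hp)
    refine ⟨p, .cons hpq Q, (Walk.cons_isCycle_iff Q hpq).mpr ⟨hQ, hQ_edge⟩,
      hφ.hasXPendantPaths hX _ fun x hx => ?_⟩
    have hxD : x ∈ D.support := by
      rcases List.mem_cons.mp (Walk.support_cons h D ▸ hXC x hx) with rfl | hx
      · exact D.end_mem_support
      · exact hx
    obtain ⟨c, hc, hcφ⟩ := hcover x hxD
    exact ⟨c, by simp [hc], hcφ⟩

end SimpleGraph.IsMinorModel

theorem generalized_from_minor_general {V : Type*} (G : SimpleGraph V)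
    (X : Set V) (U : Set V) (M : SimpleGraph V) (hM : IsXMinorOn G X U M) :
    ((∃ (u v : V) (W : M.Walk u v), W.IsPath ∧ ∀ x ∈ X, x ∈ W.support) →
        HasGeneralizedXPath G X) ∧
    ((∃ (w : V) (C : M.Walk w w), C.IsCycle ∧ ∀ x ∈ X, x ∈ C.support) →
        HasGeneralizedXCycle G X) := by
  obtain ⟨φ, hφ, hφX⟩ := hM.exists_isMinorModel
  exact ⟨fun ⟨_, _, W, hW, hXW⟩ => hφ.hasGeneralizedXPath hφX W hW hXW,
    fun ⟨_, C, hC, hXC⟩ => hφ.hasGeneralizedXCycle hφX C hC hXC⟩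

/-- Observation: if `M` (with vertex set `U`) is an `X`-minor of the finite
simple graph `G` and `M` has an `X`-spanning path (resp. an `X`-spanning
cycle), then `G` contains an `X`-spanning generalized path (resp. an
`X`-spanning generalized cycle). -/
theorem generalized_from_minor {V : Type*} [Fintype V] (G : SimpleGraph V)
    (X : Set V) (U : Set V) (M : SimpleGraph V) (hM : IsXMinorOn G X U M) :
    ((∃ (u v : V) (W : M.Walk u v), W.IsPath ∧ ∀ x ∈ X, x ∈ W.support) →
        HasGeneralizedXPath G X) ∧
    ((∃ (w : V) (C : M.Walk w w), C.IsCycle ∧ ∀ x ∈ X, x ∈ C.support) →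
        HasGeneralizedXCycle G X) :=
  generalized_from_minor_general G X U M hM
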